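/- Let B be an exchange matrix of a cluster algebra of finite type Δ and fix 1 ≤ k ≤ n. Then every companion basis for μ_k(B) is of the form μ_k(𝓑) for some companion basis 𝓑 for B, where μ_k(𝓑) denotes the inward mutation of 𝓑 at k (i.e. β_i is replaced by s_{β_k}(β_i) when B_{ik} > 0 and is unchanged otherwise); this holds because inward and outward mutation of companion bases at k are mutually inverse operations. -/

import Mathlib

/-!
Since `μ_k(B)_{ik} = -B_{ik}`, outward mutation with respect to `μ_k(B)` is inward mutation with
respect to `B`, and the latter is an involution because `B_{kk} = 0` and `s_{β_k}` is one. It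
remains to see that inward mutation carries a companion basis `β` of `μ_k(B)` to one of `B`.
Reflections preserve `Φ` and `ℤΦ`. Writing `P_{ij} = (β_i, β_j^∨)`, the pairings are unchanged
when both or neither of `β_i, β_j` are reflected, and otherwise become `P_{ij} - P_{ik} P_{kj}`.
Three linearly independent roots cannot pairwise meet at angles of at least `120°`, so `P_{ij}`
and `P_{ik} P_{kj}` have the same sign, while `|B_{ij} B_{ji}| ≤ 3` forces `μ_k(B)_{ij}` to have
the sign of `B_{ik}`; together these give `|P_{ij} - P_{ik} P_{kj}| = |B_{ij}|`.
-/

namespace ClusterReflection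

variable {n : ℕ}

/-- A square integer matrix `B` is skew-symmetrisable if `D * B` is skew-symmetric for some
diagonal matrix `D` with positive diagonal entries. -/
def IsSkewSymmetrizable (B : Matrix (Fin n) (Fin n) ℤ) : Prop :=
  ∃ d : Fin n → ℤ, (∀ i, 0 < d i) ∧ ∀ i j, d i * B i j = -(d j * B j i)

/-- Fomin-Zelevinsky matrix mutation in direction `k`. -/
def mutate (k : Fin n) (B : Matrix (Fin n) (Fin n) ℤ) : Matrix (Fin n) (Fin n) ℤ :=
  Matrix.of fun i j =>
    if i = k ∨ j = k then -B i j
    else B i j + (|B i k| * B k j + B i k * |B k j|) / 2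

/-- One-step mutation relation. -/
def Mutation (X Y : Matrix (Fin n) (Fin n) ℤ) : Prop := ∃ k, Y = mutate k X

/-- `B` is of finite type (2-finite) if every matrix obtained from it by a finite sequence of
mutations has `|B'_{ij} B'_{ji}| ≤ 3` for all `i, j`. -/
def IsFiniteType (B : Matrix (Fin n) (Fin n) ℤ) : Prop :=
  ∀ B', Relation.ReflTransGen Mutation B B' → ∀ i j, |B' i j * B' j i| ≤ 3

open RealInnerProductSpace

/-- The pairing `(β, α^∨) = 2⟪β, α⟫/⟪α, α⟫` of a vector with the coroot of `α`. -/
noncomputable def pairing (β α : EuclideanSpace ℝ (Fin n)) : ℝ :=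
  2 * ⟪β, α⟫ / ⟪α, α⟫

/-- The reflection `s_α(v) = v - (v, α^∨) α` in the root `α`. -/
noncomputable def reflRoot (α v : EuclideanSpace ℝ (Fin n)) : EuclideanSpace ℝ (Fin n) :=
  v - pairing v α • α

/-- `Φ` is a finite crystallographic root system of rank `n` in `ℝ^n`. -/
def IsRootSystem (Φ : Set (EuclideanSpace ℝ (Fin n))) : Prop :=
  Φ.Finite ∧ (∀ α ∈ Φ, α ≠ 0) ∧ Submodule.span ℝ Φ = ⊤ ∧
  (∀ α ∈ Φ, ∀ t : ℝ, t • α ∈ Φ → t = 1 ∨ t = -1) ∧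
  (∀ α ∈ Φ, ∀ β ∈ Φ, reflRoot α β ∈ Φ) ∧
  (∀ α ∈ Φ, ∀ β ∈ Φ, ∃ z : ℤ, pairing β α = z)

/-- `α` lists a base (system of simple roots) of the root system `Φ`. -/
def IsBase (Φ : Set (EuclideanSpace ℝ (Fin n)))
    (α : Fin n → EuclideanSpace ℝ (Fin n)) : Prop :=
  (∀ i, α i ∈ Φ) ∧ LinearIndependent ℝ α ∧
  ∀ γ ∈ Φ, ∃ c : Fin n → ℤ, γ = ∑ i, (c i : ℝ) • α i ∧ ((∀ i, 0 ≤ c i) ∨ (∀ i, c i ≤ 0))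

/-- The Cartan counterpart `A(B)` of a skew-symmetrisable matrix `B`. -/
def cartanCounterpart (B : Matrix (Fin n) (Fin n) ℤ) : Matrix (Fin n) (Fin n) ℤ :=
  Matrix.of fun i j => if i = j then 2 else -|B i j|

/-- `B` is an exchange matrix of the cluster algebra of finite type whose root system is `Φ`:
it is skew-symmetrisable of finite type and mutation-equivalent to a matrix whose Cartan
counterpart is the Cartan matrix of the corresponding Dynkin diagram, i.e. the matrix of
pairings `(α_i, α_j^∨)` of a base of `Φ`. -/
def IsExchangeMatrix (Φ : Set (EuclideanSpace ℝ (Fin n)))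
    (B : Matrix (Fin n) (Fin n) ℤ) : Prop :=
  IsSkewSymmetrizable B ∧ IsFiniteType B ∧
  ∃ B₀ : Matrix (Fin n) (Fin n) ℤ, Relation.ReflTransGen Mutation B B₀ ∧
    ∃ α : Fin n → EuclideanSpace ℝ (Fin n), IsBase Φ α ∧
      ∀ i j, (cartanCounterpart B₀ i j : ℝ) = pairing (α i) (α j)

/-- `β` is a companion basis for `B`: a family of roots forming a `ℤ`-basis of the root
lattice `ℤΦ` with `|(β_i, β_j^∨)| = |B_{ij}|` for all `i ≠ j`. -/
def IsCompanionBasis (Φ : Set (EuclideanSpace ℝ (Fin n))) (B : Matrix (Fin n) (Fin n) ℤ)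
    (β : Fin n → EuclideanSpace ℝ (Fin n)) : Prop :=
  (∀ i, β i ∈ Φ) ∧ LinearIndependent ℤ β ∧
  Submodule.span ℤ (Set.range β) = Submodule.span ℤ Φ ∧
  ∀ i j, i ≠ j → |pairing (β i) (β j)| = |(B i j : ℝ)|

/-- The inward mutation `μ_k(𝓑)` of a companion basis: `β_i` is replaced by `s_{β_k}(β_i)`
whenever there is an arrow `i → k` in `Γ(B)` (i.e. `B_{ik} > 0`), and unchanged otherwise. -/
noncomputable def mutateBasis (B : Matrix (Fin n) (Fin n) ℤ) (k : Fin n)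
    (β : Fin n → EuclideanSpace ℝ (Fin n)) : Fin n → EuclideanSpace ℝ (Fin n) :=
  fun i => if 0 < B i k then reflRoot (β k) (β i) else β i

/-- The outward mutation of a companion basis at `k`: `β_i` is replaced by `s_{β_k}(β_i)`
whenever `B_{ik} < 0`, and unchanged otherwise. -/
noncomputable def mutateBasisOut (B : Matrix (Fin n) (Fin n) ℤ) (k : Fin n)
    (β : Fin n → EuclideanSpace ℝ (Fin n)) : Fin n → EuclideanSpace ℝ (Fin n) :=
  fun i => if B i k < 0 then reflRoot (β k) (β i) else β i

namespace IsSkewSymmetrizable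

variable {B : Matrix (Fin n) (Fin n) ℤ}

theorem apply_self (h : IsSkewSymmetrizable B) (i : Fin n) : B i i = 0 := by
  obtain ⟨d, hd, hB⟩ := h
  nlinarith [hd i, hB i i]

theorem pos_iff_neg (h : IsSkewSymmetrizable B) (i j : Fin n) : 0 < B i j ↔ B j i < 0 := by
  obtain ⟨d, hd, hB⟩ := h
  constructor <;> intro h <;> nlinarith [hd i, hd j, hB i j]

theorem neg (h : IsSkewSymmetrizable B) : IsSkewSymmetrizable (-B) := by
  obtain ⟨d, hd, hB⟩ := h
  exact ⟨d, hd, fun i j => by simp [hB i j]⟩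

/-- The left side is `μ_k(B)_{ij}`; were it negative, skew-symmetrisability (`hskew`) would give
`B_{ji} > B_{jk} B_{ki} ≥ 1`, hence `B_{ij} B_{ji} ≤ -4`. -/
theorem add_mul_nonneg (hsk : IsSkewSymmetrizable B) {i j k : Fin n}
    (h3 : |B i j * B j i| ≤ 3) (hik : 0 < B i k) (hkj : 0 < B k j) :
    0 ≤ B i j + B i k * B k j := by
  obtain ⟨d, hd, hB⟩ := hsk
  have hdi := hd i
  have hdj := hd j
  have hdk := hd k
  have hki : B k i < 0 := by nlinarith [hB i k]
  have hjk : B j k < 0 := by nlinarith [hB k j]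
  have hskew : d j * B j i = -(d i * (B i j + B i k * B k j)) + d j * (B k i * B j k) := by
    linear_combination hB i j + B k j * hB i k - B k i * hB k j
  rw [abs_le] at h3
  by_contra! hneg
  have hji : B k i * B j k < B j i := by nlinarith
  have hji2 : 2 ≤ B j i := by nlinarith
  have hij : B i j ≤ -2 := by nlinarith
  nlinarith

end IsSkewSymmetrizable

section Mutation

variable {B : Matrix (Fin n) (Fin n) ℤ} {i j k : Fin n}

theorem mutate_apply_right (B : Matrix (Fin n) (Fin n) ℤ) (k i : Fin n) :
    mutate k B i k = -B i k := by
  simp [mutate]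

theorem mutate_apply_left (B : Matrix (Fin n) (Fin n) ℤ) (k j : Fin n) :
    mutate k B k j = -B k j := by
  simp [mutate]

theorem mutate_apply_of_mul_nonpos (hi : i ≠ k) (hj : j ≠ k) (h : B i k * B k j ≤ 0) :
    mutate k B i j = B i j := by
  have : |B i k| * B k j + B i k * |B k j| = 0 := by
    rcases le_total 0 (B i k) with h1 | h1 <;> rcases le_total 0 (B k j) with h2 | h2 <;>
      simp only [abs_of_nonneg, abs_of_nonpos, h1, h2] <;> nlinarith
  simp [mutate, hi, hj, this]

theorem mutate_apply_of_mul_nonneg (hi : i ≠ k) (hj : j ≠ k) (h : 0 ≤ B i k * B k j) :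
    mutate k B i j = B i j + B i k * |B k j| := by
  have : |B i k| * B k j + B i k * |B k j| = 2 * (B i k * |B k j|) := by
    rcases le_total 0 (B i k) with h1 | h1 <;> rcases le_total 0 (B k j) with h2 | h2 <;>
      simp only [abs_of_nonneg, abs_of_nonpos, h1, h2] <;> nlinarith
  simp [mutate, hi, hj, this]

theorem abs_abs_mutate_apply_sub (hsk : IsSkewSymmetrizable B) (h3 : |B i j * B j i| ≤ 3)
    (hi : i ≠ k) (hj : j ≠ k) (h : 0 ≤ B i k * B k j) :
    |(|mutate k B i j| - |B i k| * |B k j|)| = |B i j| := by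
  rcases h.eq_or_lt with h0 | hpos
  · rw [mutate_apply_of_mul_nonpos hi hj h0.ge, ← abs_mul, ← h0, abs_zero, sub_zero, abs_abs]
  rw [mutate_apply_of_mul_nonneg hi hj h]
  rcases lt_or_gt_of_ne (left_ne_zero_of_mul hpos.ne') with hik | hik
  · have hkj : B k j < 0 := by nlinarith
    have := hsk.neg.add_mul_nonneg (i := i) (j := j) (k := k) (by simpa using h3)
      (by simpa using hik) (by simpa using hkj)
    simp only [Matrix.neg_apply, neg_mul_neg] at this
    have e : |(B i j + B i k * |B k j|)| - |B i k| * |B k j| = -B i j := by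
      rw [abs_of_neg hik, abs_of_neg hkj, abs_of_nonpos (by nlinarith)]
      ring
    rw [e, abs_neg]
  · have hkj : 0 < B k j := by nlinarith
    have := hsk.add_mul_nonneg h3 hik hkj
    rw [abs_of_pos hik, abs_of_pos hkj, abs_of_nonneg this, add_sub_cancel_right]

end Mutation

section Reflection

variable {α : EuclideanSpace ℝ (Fin n)}

theorem pairing_self (hα : α ≠ 0) : pairing α α = 2 := by
  rw [pairing, mul_div_assoc, div_self (inner_self_ne_zero.mpr hα), mul_one]

theorem pairing_reflRoot_left (α u v : EuclideanSpace ℝ (Fin n)) :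
    pairing (reflRoot α u) v = pairing u v - pairing u α * pairing α v := by
  simp only [pairing, reflRoot, inner_sub_left, real_inner_smul_left]
  ring

theorem inner_reflRoot_reflRoot (hα : α ≠ 0) (u v : EuclideanSpace ℝ (Fin n)) :
    ⟪reflRoot α u, reflRoot α v⟫ = ⟪u, v⟫ := by
  have hα' : ⟪α, α⟫ ≠ 0 := inner_self_ne_zero.mpr hα
  simp only [reflRoot, pairing, inner_sub_left, inner_sub_right, real_inner_smul_left,
    real_inner_smul_right, real_inner_comm α u, real_inner_comm α v]
  field_simp
  ring

theorem pairing_reflRoot_reflRoot (hα : α ≠ 0) (u v : EuclideanSpace ℝ (Fin n)) :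
    pairing (reflRoot α u) (reflRoot α v) = pairing u v := by
  simp only [pairing, inner_reflRoot_reflRoot hα]

theorem reflRoot_reflRoot (hα : α ≠ 0) (v : EuclideanSpace ℝ (Fin n)) :
    reflRoot α (reflRoot α v) = v := by
  have h : pairing (reflRoot α v) α = -pairing v α := by
    rw [pairing_reflRoot_left, pairing_self hα]; ring
  rw [reflRoot, h, reflRoot]
  module

theorem pairing_reflRoot_right (hα : α ≠ 0) (u v : EuclideanSpace ℝ (Fin n)) :
    pairing u (reflRoot α v) = pairing u v - pairing u α * pairing α v := by
  conv_lhs => rw [← reflRoot_reflRoot hα u, pairing_reflRoot_reflRoot hα]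
  exact pairing_reflRoot_left α u v

theorem abs_pairing_reflRoot_self (hα : α ≠ 0) (u : EuclideanSpace ℝ (Fin n)) :
    |pairing (reflRoot α u) α| = |pairing u α| := by
  rw [pairing_reflRoot_left, pairing_self hα, ← abs_neg]; ring_nf

theorem abs_pairing_self_reflRoot (hα : α ≠ 0) (v : EuclideanSpace ℝ (Fin n)) :
    |pairing α (reflRoot α v)| = |pairing α v| := by
  rw [pairing_reflRoot_right hα, pairing_self hα, ← abs_neg]; ring_nf

end Reflection

theorem abs_sub_eq_abs_abs_sub_abs_of_mul_nonneg {R : Type*} [Ring R] [LinearOrder R]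
    [IsStrictOrderedRing R] {a b : R} (h : 0 ≤ a * b) : |a - b| = |(|a| - |b|)| := by
  rcases le_total 0 a with ha | ha <;> rcases le_total 0 b with hb | hb
  · rw [abs_of_nonneg ha, abs_of_nonneg hb]
  · obtain rfl | rfl := mul_eq_zero.mp ((mul_nonpos_of_nonneg_of_nonpos ha hb).antisymm h) <;>
      simp
  · obtain rfl | rfl := mul_eq_zero.mp ((mul_nonpos_of_nonpos_of_nonneg ha hb).antisymm h) <;>
      simp
  · rw [abs_of_nonpos ha, abs_of_nonpos hb, ← abs_neg, neg_sub, neg_sub_neg]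

/-- With `a, b, c` the norms of `u, v, w`, the left side `x` has
`‖x‖² = 3 (abc)² + 2abc (c⟪u, v⟫ + a⟪v, w⟫ + b⟪w, u⟫) ≤ 0`. -/
theorem smul_add_smul_add_smul_eq_zero_of_obtuse {F : Type*} [NormedAddCommGroup F]
    [InnerProductSpace ℝ F] {u v w : F} (huv : ‖u‖ * ‖v‖ ≤ -2 * ⟪u, v⟫)
    (hvw : ‖v‖ * ‖w‖ ≤ -2 * ⟪v, w⟫) (hwu : ‖w‖ * ‖u‖ ≤ -2 * ⟪w, u⟫) :
    (‖v‖ * ‖w‖) • u + (‖w‖ * ‖u‖) • v + (‖u‖ * ‖v‖) • w = 0 := by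
  rw [← real_inner_self_nonpos]
  simp only [inner_add_left, inner_add_right, real_inner_smul_left, real_inner_smul_right]
  simp only [real_inner_self_eq_norm_sq, real_inner_comm u v, real_inner_comm v w,
    real_inner_comm w u]
  have ha := norm_nonneg u
  have hb := norm_nonneg v
  have hc := norm_nonneg w
  have habc := mul_nonneg (mul_nonneg ha hb) hc
  nlinarith [mul_le_mul_of_nonneg_left huv (mul_nonneg habc hc),
    mul_le_mul_of_nonneg_left hvw (mul_nonneg habc ha),
    mul_le_mul_of_nonneg_left hwu (mul_nonneg habc hb)]

theorem pairing_eq_zero_iff {u v : EuclideanSpace ℝ (Fin n)} (hv : v ≠ 0) :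
    pairing u v = 0 ↔ ⟪u, v⟫ = 0 := by
  simp [pairing, hv]

theorem exists_abs_eq_one_mul_eq_neg_abs (x : ℝ) : ∃ σ : ℝ, |σ| = 1 ∧ σ * x = -|x| := by
  rcases le_total 0 x with hx | hx
  · exact ⟨-1, by simp, by rw [abs_of_nonneg hx]; ring⟩
  · exact ⟨1, by simp, by rw [abs_of_nonpos hx]; ring⟩

namespace IsRootSystem

variable {Φ : Set (EuclideanSpace ℝ (Fin n))}

theorem ne_zero (hΦ : IsRootSystem Φ) {α : EuclideanSpace ℝ (Fin n)} (hα : α ∈ Φ) : α ≠ 0 :=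
  hΦ.2.1 α hα

theorem reflRoot_mem (hΦ : IsRootSystem Φ) {α v : EuclideanSpace ℝ (Fin n)} (hα : α ∈ Φ)
    (hv : v ∈ Φ) : reflRoot α v ∈ Φ :=
  hΦ.2.2.2.2.1 α hα v hv

theorem exists_pairing_eq_intCast (hΦ : IsRootSystem Φ) {u α : EuclideanSpace ℝ (Fin n)}
    (hu : u ∈ Φ) (hα : α ∈ Φ) : ∃ z : ℤ, pairing u α = z :=
  hΦ.2.2.2.2.2 α hα u hu

/-- Non-orthogonal roots make an angle of at most `60°` or at least `120°`, since
`(u, v^∨) (v, u^∨) = 4 cos² θ` is a nonzero integer. -/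
theorem norm_mul_norm_le_two_mul_abs_inner (hΦ : IsRootSystem Φ) {u v : EuclideanSpace ℝ (Fin n)}
    (hu : u ∈ Φ) (hv : v ∈ Φ) (h : ⟪u, v⟫ ≠ 0) : ‖u‖ * ‖v‖ ≤ 2 * |⟪u, v⟫| := by
  have hu0 := hΦ.ne_zero hu
  have hv0 := hΦ.ne_zero hv
  obtain ⟨z₁, hz₁⟩ := hΦ.exists_pairing_eq_intCast hu hv
  obtain ⟨z₂, hz₂⟩ := hΦ.exists_pairing_eq_intCast hv hu
  have hz : z₁ * z₂ ≠ 0 := by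
    refine mul_ne_zero ?_ ?_ <;> rintro rfl
    · exact h ((pairing_eq_zero_iff hv0).mp (by simpa using hz₁))
    · exact h (real_inner_comm u v ▸ (pairing_eq_zero_iff hu0).mp (by simpa using hz₂))
  have hprod : pairing u v * pairing v u = (2 * ⟪u, v⟫) ^ 2 / (‖u‖ * ‖v‖) ^ 2 := by
    simp only [pairing, real_inner_self_eq_norm_sq, real_inner_comm u v]
    field_simp
  have hone : (1 : ℝ) ≤ (2 * ⟪u, v⟫) ^ 2 / (‖u‖ * ‖v‖) ^ 2 := by
    rw [← abs_of_nonneg (by positivity : (0 : ℝ) ≤ (2 * ⟪u, v⟫) ^ 2 / (‖u‖ * ‖v‖) ^ 2), ← hprod,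
      hz₁, hz₂]
    exact_mod_cast Int.one_le_abs hz
  rw [one_le_div (by positivity)] at hone
  simpa [abs_mul] using sq_le_sq.mp hone

theorem linearIndependent_of_span_eq (hΦ : IsRootSystem Φ) {β : Fin n → EuclideanSpace ℝ (Fin n)}
    (h : Submodule.span ℤ (Set.range β) = Submodule.span ℤ Φ) : LinearIndependent ℝ β := by
  refine linearIndependent_of_top_le_span_of_card_eq_finrank ?_ (by simp)
  rw [← hΦ.2.2.1, Submodule.span_le]
  intro x hx
  have : x ∈ Submodule.span ℤ (Set.range β) := h ▸ Submodule.subset_span hx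
  exact Submodule.span_subset_span ℤ ℝ _ this

/-- Three linearly independent roots cannot be pairwise at angles of at least `120°`; flipping
the signs of `v` and `w` reduces the claim to that case. -/
theorem inner_mul_inner_mul_inner_nonneg (hΦ : IsRootSystem Φ)
    {u v w : EuclideanSpace ℝ (Fin n)} (hu : u ∈ Φ) (hv : v ∈ Φ) (hw : w ∈ Φ)
    (hli : LinearIndependent ℝ ![u, v, w]) : 0 ≤ ⟪u, v⟫ * ⟪v, w⟫ * ⟪w, u⟫ := by
  by_contra! hneg
  obtain ⟨huvw, hwu⟩ := mul_ne_zero_iff.mp hneg.ne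
  obtain ⟨huv, hvw⟩ := mul_ne_zero_iff.mp huvw
  obtain ⟨σ, hσ, hσuv⟩ := exists_abs_eq_one_mul_eq_neg_abs ⟪u, v⟫
  obtain ⟨τ, hτ, hτwu⟩ := exists_abs_eq_one_mul_eq_neg_abs ⟪w, u⟫
  have hσ2 : σ * σ = 1 := by rw [← abs_mul_abs_self, hσ, one_mul]
  have hτ2 : τ * τ = 1 := by rw [← abs_mul_abs_self, hτ, one_mul]
  have hστ : σ * τ * ⟪v, w⟫ < 0 := by
    have key : (σ * ⟪u, v⟫) * (σ * τ * ⟪v, w⟫) * (τ * ⟪w, u⟫) = ⟪u, v⟫ * ⟪v, w⟫ * ⟪w, u⟫ := by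
      linear_combination (τ * τ * ⟪u, v⟫ * ⟪v, w⟫ * ⟪w, u⟫) * hσ2 + ⟪u, v⟫ * ⟪v, w⟫ * ⟪w, u⟫ * hτ2
    rw [hσuv, hτwu] at key
    nlinarith [abs_pos.mpr huv, abs_pos.mpr hwu, mul_pos (abs_pos.mpr huv) (abs_pos.mpr hwu)]
  have hrel := smul_add_smul_add_smul_eq_zero_of_obtuse (u := u) (v := σ • v) (w := τ • w)
    (by
      rw [norm_smul, Real.norm_eq_abs, hσ, one_mul, real_inner_smul_right, hσuv]
      linarith [hΦ.norm_mul_norm_le_two_mul_abs_inner hu hv huv])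
    (by
      have habs : |σ * τ * ⟪v, w⟫| = |⟪v, w⟫| := by rw [abs_mul, abs_mul, hσ, hτ, one_mul, one_mul]
      rw [abs_of_neg hστ] at habs
      rw [norm_smul, norm_smul, Real.norm_eq_abs, Real.norm_eq_abs, hσ, hτ, real_inner_smul_left,
        real_inner_smul_right]
      linarith [hΦ.norm_mul_norm_le_two_mul_abs_inner hv hw hvw])
    (by
      rw [norm_smul, Real.norm_eq_abs, hτ, one_mul, real_inner_smul_left, hτwu]
      linarith [hΦ.norm_mul_norm_le_two_mul_abs_inner hw hu hwu])
  simp only [norm_smul, Real.norm_eq_abs, hσ, hτ, one_mul, smul_smul] at hrel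
  have := Fintype.linearIndependent_iff.mp hli ![‖v‖ * ‖w‖, ‖w‖ * ‖u‖ * σ, ‖u‖ * ‖v‖ * τ]
    (by simpa [Fin.sum_univ_three] using hrel) 0
  simp [hΦ.ne_zero hv, hΦ.ne_zero hw] at this

theorem pairing_mul_pairing_mul_pairing_nonneg (hΦ : IsRootSystem Φ)
    {β : Fin n → EuclideanSpace ℝ (Fin n)} (hβ : ∀ i, β i ∈ Φ)
    (hli : LinearIndependent ℝ β) {i j k : Fin n} (hij : i ≠ j) (hik : i ≠ k) (hjk : j ≠ k) :
    0 ≤ pairing (β i) (β j) * (pairing (β i) (β k) * pairing (β k) (β j)) := by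
  have hinj : Function.Injective ![i, k, j] := by
    intro x y
    fin_cases x <;> fin_cases y <;> simp_all [eq_comm]
  have hli' : LinearIndependent ℝ ![β i, β k, β j] := by
    convert hli.comp _ hinj using 1
    ext x : 1
    fin_cases x <;> rfl
  have h := hΦ.inner_mul_inner_mul_inner_nonneg (hβ i) (hβ k) (hβ j) hli'
  have e : pairing (β i) (β j) * (pairing (β i) (β k) * pairing (β k) (β j)) =
      ⟪β i, β k⟫ * ⟪β k, β j⟫ * ⟪β j, β i⟫ * (8 / (⟪β k, β k⟫ * ⟪β j, β j⟫ ^ 2)) := by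
    simp only [pairing, real_inner_comm (β i) (β j)]
    ring
  rw [e]
  exact mul_nonneg h (div_nonneg (by norm_num)
    (mul_nonneg real_inner_self_nonneg (pow_nonneg real_inner_self_nonneg 2)))

end IsRootSystem

section MutateBasis

variable {Φ : Set (EuclideanSpace ℝ (Fin n))} {B : Matrix (Fin n) (Fin n) ℤ} {k : Fin n}
  {β : Fin n → EuclideanSpace ℝ (Fin n)}

theorem mutateBasisOut_mutate (B : Matrix (Fin n) (Fin n) ℤ) (k : Fin n) :
    mutateBasisOut (mutate k B) k = mutateBasis B k := by
  funext β i
  simp [mutateBasisOut, mutateBasis, mutate_apply_right]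

theorem mutateBasis_apply_self (hkk : B k k = 0) : mutateBasis B k β k = β k := by
  simp [mutateBasis, hkk]

theorem mutateBasis_mutateBasis (hkk : B k k = 0) (hβk : β k ≠ 0) :
    mutateBasis B k (mutateBasis B k β) = β := by
  funext i
  rw [mutateBasis, mutateBasis_apply_self hkk]
  by_cases hi : 0 < B i k <;> simp [mutateBasis, hi, reflRoot_reflRoot hβk]

theorem mutateBasis_mem (hΦ : IsRootSystem Φ) (hβ : ∀ i, β i ∈ Φ) (i : Fin n) :
    mutateBasis B k β i ∈ Φ := by
  unfold mutateBasis
  split_ifs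
  exacts [hΦ.reflRoot_mem (hβ k) (hβ i), hβ i]

theorem span_range_mutateBasis_le (hΦ : IsRootSystem Φ) (hβ : ∀ i, β i ∈ Φ) :
    Submodule.span ℤ (Set.range (mutateBasis B k β)) ≤ Submodule.span ℤ (Set.range β) := by
  rw [Submodule.span_le]
  rintro _ ⟨i, rfl⟩
  have hi : β i ∈ Submodule.span ℤ (Set.range β) := Submodule.subset_span ⟨i, rfl⟩
  have hk : β k ∈ Submodule.span ℤ (Set.range β) := Submodule.subset_span ⟨k, rfl⟩
  unfold mutateBasis
  split_ifs
  · obtain ⟨z, hz⟩ := hΦ.exists_pairing_eq_intCast (hβ i) (hβ k)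
    rw [reflRoot, hz, Int.cast_smul_eq_zsmul]
    exact sub_mem hi (Submodule.smul_mem _ z hk)
  · exact hi

theorem span_range_mutateBasis (hΦ : IsRootSystem Φ) (hkk : B k k = 0) (hβ : ∀ i, β i ∈ Φ) :
    Submodule.span ℤ (Set.range (mutateBasis B k β)) = Submodule.span ℤ (Set.range β) := by
  refine (span_range_mutateBasis_le hΦ hβ).antisymm ?_
  conv_lhs => rw [← mutateBasis_mutateBasis hkk (hΦ.ne_zero (hβ k))]
  exact span_range_mutateBasis_le hΦ (mutateBasis_mem hΦ hβ)

end MutateBasis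

section CompanionBasis

variable {Φ : Set (EuclideanSpace ℝ (Fin n))} {B : Matrix (Fin n) (Fin n) ℤ} {k : Fin n}
  {β : Fin n → EuclideanSpace ℝ (Fin n)}

theorem abs_pairing_mutateBasis (hΦ : IsRootSystem Φ) (hsk : IsSkewSymmetrizable B)
    {i j : Fin n} (h3 : |B i j * B j i| ≤ 3) (hβ : IsCompanionBasis Φ (mutate k B) β)
    (hij : i ≠ j) : |pairing (mutateBasis B k β i) (mutateBasis B k β j)| = |(B i j : ℝ)| := by
  obtain ⟨hroots, -, hspan, hpair⟩ := hβ
  have hα := hΦ.ne_zero (hroots k)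
  have hkk := hsk.apply_self k
  rcases eq_or_ne i k with rfl | hik
  · have : |pairing (β i) (mutateBasis B i β j)| = |pairing (β i) (β j)| := by
      unfold mutateBasis; split_ifs
      exacts [abs_pairing_self_reflRoot hα _, rfl]
    rw [mutateBasis_apply_self hkk, this, hpair i j hij, mutate_apply_left, Int.cast_neg, abs_neg]
  rcases eq_or_ne j k with rfl | hjk
  · have : |pairing (mutateBasis B j β i) (β j)| = |pairing (β i) (β j)| := by
      unfold mutateBasis; split_ifs
      exacts [abs_pairing_reflRoot_self hα _, rfl]
    rw [mutateBasis_apply_self hkk, this, hpair i j hij, mutate_apply_right, Int.cast_neg,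
      abs_neg]
  have hkj := hsk.pos_iff_neg j k
  by_cases hsame : 0 < B i k ↔ 0 < B j k
  · have hmul : B i k * B k j ≤ 0 := by
      by_cases hi : 0 < B i k
      · exact (mul_neg_of_pos_of_neg hi (hkj.mp (hsame.mp hi))).le
      · exact mul_nonpos_of_nonpos_of_nonneg (not_lt.mp hi)
          (not_lt.mp (mt hkj.mpr (mt hsame.mpr hi)))
    have : pairing (mutateBasis B k β i) (mutateBasis B k β j) = pairing (β i) (β j) := by
      unfold mutateBasis; split_ifs <;> first | tauto | exact pairing_reflRoot_reflRoot hα _ _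
    rw [this, hpair i j hij, mutate_apply_of_mul_nonpos hik hjk hmul]
  · have hmul : 0 ≤ B i k * B k j := by
      by_cases hi : 0 < B i k
      · exact mul_nonneg hi.le (not_lt.mp (mt hkj.mpr (fun h => hsame ⟨fun _ => h, fun _ => hi⟩)))
      · exact mul_nonneg_of_nonpos_of_nonpos (not_lt.mp hi)
          (hkj.mp (by tauto)).le
    have : pairing (mutateBasis B k β i) (mutateBasis B k β j) =
        pairing (β i) (β j) - pairing (β i) (β k) * pairing (β k) (β j) := by
      unfold mutateBasis; split_ifs
      · tauto
      · exact pairing_reflRoot_left _ _ _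
      · exact pairing_reflRoot_right hα _ _
      · tauto
    have hsign := hΦ.pairing_mul_pairing_mul_pairing_nonneg hroots
      (hΦ.linearIndependent_of_span_eq hspan) hij hik hjk
    rw [this, abs_sub_eq_abs_abs_sub_abs_of_mul_nonneg hsign, abs_mul, hpair i j hij,
      hpair i k hik, hpair k j hjk.symm, mutate_apply_right, mutate_apply_left, Int.cast_neg,
      Int.cast_neg, abs_neg, abs_neg]
    exact_mod_cast abs_abs_mutate_apply_sub hsk h3 hik hjk hmul

theorem isCompanionBasis_mutateBasis (hΦ : IsRootSystem Φ) (hsk : IsSkewSymmetrizable B)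
    (h3 : ∀ i j, |B i j * B j i| ≤ 3) (hβ : IsCompanionBasis Φ (mutate k B) β) :
    IsCompanionBasis Φ B (mutateBasis B k β) := by
  have hspan : Submodule.span ℤ (Set.range (mutateBasis B k β)) = Submodule.span ℤ Φ :=
    (span_range_mutateBasis hΦ (hsk.apply_self k) hβ.1).trans hβ.2.2.1
  exact ⟨mutateBasis_mem hΦ hβ.1, (hΦ.linearIndependent_of_span_eq hspan).restrict_scalars' ℤ,
    hspan, fun _ _ hij => abs_pairing_mutateBasis hΦ hsk (h3 _ _) hβ hij⟩

end CompanionBasis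

/-- Remark 6.5: every companion basis for `μ_k(B)` is the inward mutation at
`k` of some companion basis for `B`; indeed inward mutation at `k` (with respect to `B`) and
outward mutation at `k` (with respect to `μ_k(B)`) are mutually inverse operations. -/
theorem companion_basis_mutation_surjective
    (Φ : Set (EuclideanSpace ℝ (Fin n))) (hΦ : IsRootSystem Φ)
    (B : Matrix (Fin n) (Fin n) ℤ) (hB : IsExchangeMatrix Φ B) (k : Fin n) :
    (∀ β' : Fin n → EuclideanSpace ℝ (Fin n), IsCompanionBasis Φ (mutate k B) β' →
      ∃ β : Fin n → EuclideanSpace ℝ (Fin n),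
        IsCompanionBasis Φ B β ∧ β' = mutateBasis B k β) ∧
    (∀ β : Fin n → EuclideanSpace ℝ (Fin n), IsCompanionBasis Φ B β →
      mutateBasisOut (mutate k B) k (mutateBasis B k β) = β) ∧
    (∀ β' : Fin n → EuclideanSpace ℝ (Fin n), IsCompanionBasis Φ (mutate k B) β' →
      mutateBasis B k (mutateBasisOut (mutate k B) k β') = β') := by
  obtain ⟨hsk, hft, -⟩ := hB
  have h3 : ∀ i j, |B i j * B j i| ≤ 3 := hft B .refl
  have hinv : ∀ C β, IsCompanionBasis Φ C β → mutateBasis B k (mutateBasis B k β) = β :=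
    fun _ _ hβ => mutateBasis_mutateBasis (hsk.apply_self k) (hΦ.ne_zero (hβ.1 k))
  simp only [mutateBasisOut_mutate]
  exact ⟨fun β' hβ' => ⟨_, isCompanionBasis_mutateBasis hΦ hsk h3 hβ', (hinv _ _ hβ').symm⟩,
    fun β hβ => hinv _ _ hβ, fun β' hβ' => hinv _ _ hβ'⟩

end ClusterReflection
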